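/- arXiv:2005.04015 — 9 statements merged into one kernel-verified Lean document; each statement's English description precedes it below -/
import Mathlib

section
/- Suppose V has dimension 2 over ℝ. Then for every element U of the Clifford algebra Cl(Q), one has U + reverse(involute(U)) = involute(U) + reverse(U), and this element is a scalar, i.e. lies in the range of the algebra map ℝ → Cl(Q). -/
/-!
In dimension two every product of three vectors is again a vector: expanding in a basis
`e₀, e₁`, each product of three basis vectors repeats a factor and collapses by `eᵢ² = Q eᵢ`
and `eᵢeⱼeᵢ = polar(eᵢ, eⱼ) eᵢ - Q(eᵢ) eⱼ`. Hence the Clifford algebra is spanned by scalars,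
vectors and products `x y` of two vectors. Both claims are linear in `U`, and on these spanning
elements they are immediate: for a vector `v`, `v + Û̃ = v - v = 0`, and for `x y`, the grade
involution fixes it and reversion swaps the factors, so `x y + y x = polar(x, y)` is a scalar.
-/

open CliffordAlgebra

theorem Submodule.pow_le_one_sup_sup_sq_of_pow_three_le {R A : Type*} [CommSemiring R]
    [Semiring A] [Algebra R A] {p : Submodule R A} (hp : p ^ 3 ≤ p) (n : ℕ) :
    p ^ n ≤ 1 ⊔ p ⊔ p ^ 2 := by
  induction n using Nat.strong_induction_on with
  | _ n ih =>
    match n with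
    | 0 => exact (pow_zero p).trans_le (le_sup_left.trans le_sup_left)
    | 1 => exact (pow_one p).trans_le (le_sup_right.trans le_sup_left)
    | 2 => exact le_sup_right
    | n + 3 =>
      calc p ^ (n + 3) = p ^ n * p ^ 3 := pow_add p n 3
        _ ≤ p ^ n * p := mul_le_mul_right hp _
        _ = p ^ (n + 1) := (pow_succ p n).symm
        _ ≤ 1 ⊔ p ⊔ p ^ 2 := ih (n + 1) (by omega)

namespace CliffordAlgebra

variable {R M : Type*} [CommRing R] [AddCommGroup M] [Module R M] {Q : QuadraticForm R M}

theorem ι_range_pow_three_le (b : Module.Basis (Fin 2) R M) :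
    LinearMap.range (ι Q) ^ 3 ≤ LinearMap.range (ι Q) := by
  have hspan : LinearMap.range (ι Q) = Submodule.span R (Set.range fun i => ι Q (b i)) := by
    rw [LinearMap.range_eq_map, ← b.span_eq, Submodule.map_span, ← Set.range_comp]
    rfl
  rw [pow_three', hspan, Submodule.span_mul_span, Submodule.span_mul_span, Submodule.span_le,
    ← hspan]
  rintro _ ⟨_, ⟨_, ⟨i, rfl⟩, _, ⟨j, rfl⟩, rfl⟩, _, ⟨k, rfl⟩, rfl⟩
  dsimp only
  have : i = j ∨ j = k ∨ i = k := by omega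
  rcases this with rfl | rfl | rfl
  · rw [ι_sq_scalar, ← Algebra.smul_def, ← map_smul]
    exact LinearMap.mem_range_self _ _
  · rw [mul_assoc, ι_sq_scalar, ← Algebra.commutes, ← Algebra.smul_def, ← map_smul]
    exact LinearMap.mem_range_self _ _
  · rw [ι_mul_ι_mul_ι]
    exact LinearMap.mem_range_self _ _

theorem one_sup_ι_range_sup_sq_eq_top (b : Module.Basis (Fin 2) R M) :
    1 ⊔ LinearMap.range (ι Q) ⊔ LinearMap.range (ι Q) ^ 2 = ⊤ :=
  top_unique <| (iSup_ι_range_eq_top (Q := Q)).symm.trans_le <|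
    iSup_le (Submodule.pow_le_one_sup_sup_sq_of_pow_three_le (ι_range_pow_three_le b))

theorem add_reverse_involute_eq_and_mem_one {U : CliffordAlgebra Q}
    (hU : U ∈ 1 ⊔ LinearMap.range (ι Q) ⊔ LinearMap.range (ι Q) ^ 2) :
    U + reverse (involute U) = involute U + reverse U ∧
      U + reverse (involute U) ∈ (1 : Submodule R (CliffordAlgebra Q)) := by
  let conjAdd : CliffordAlgebra Q →ₗ[R] CliffordAlgebra Q :=
    LinearMap.id + reverse ∘ₗ involute.toLinearMap
  let involuteAddReverse : CliffordAlgebra Q →ₗ[R] CliffordAlgebra Q :=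
    involute.toLinearMap + reverse
  suffices h : 1 ⊔ LinearMap.range (ι Q) ⊔ LinearMap.range (ι Q) ^ 2 ≤
      LinearMap.eqLocus conjAdd involuteAddReverse ⊓ (1 : Submodule R _).comap conjAdd from
    h hU
  refine sup_le (sup_le ?_ ?_) ?_
  · rw [Submodule.one_le]
    refine ⟨by simp [conjAdd, involuteAddReverse], ?_⟩
    exact Submodule.mem_one.2 ⟨2, by simp [conjAdd, one_add_one_eq_two, map_ofNat]⟩
  · rintro _ ⟨v, rfl⟩
    simp [conjAdd, involuteAddReverse, involute_ι, reverse_ι]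
  · rw [pow_two, Submodule.mul_le]
    rintro _ ⟨x, rfl⟩ _ ⟨y, rfl⟩
    have hconj : conjAdd (ι Q x * ι Q y) = algebraMap R _ (QuadraticMap.polar Q x y) := by
      simp [conjAdd, involute_ι, reverse_ι, ι_mul_ι_add_swap]
    refine ⟨?_, ?_⟩
    · simp [conjAdd, involuteAddReverse, involute_ι, reverse_ι]
    · exact Submodule.mem_one.2 ⟨_, hconj.symm⟩

end CliffordAlgebra

theorem stmt_2 {V : Type*} [AddCommGroup V] [Module ℝ V] (Q : QuadraticForm ℝ V)
    (h : Module.finrank ℝ V = 2) (U : CliffordAlgebra Q) :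
    U + reverse (involute U) = involute U + reverse U ∧
    U + reverse (involute U) ∈ Set.range (algebraMap ℝ (CliffordAlgebra Q)) := by
  have : FiniteDimensional ℝ V := .of_finrank_pos (by omega)
  have hU : U ∈ 1 ⊔ LinearMap.range (ι Q) ⊔ LinearMap.range (ι Q) ^ 2 := by
    rw [one_sup_ι_range_sup_sq_eq_top (Module.finBasisOfFinrankEq ℝ V h)]
    trivial
  obtain ⟨hEq, hScalar⟩ := add_reverse_involute_eq_and_mem_one hU
  exact ⟨hEq, Submodule.mem_one.1 hScalar⟩
end

section
/- Suppose V has dimension 3 over ℝ. Then for every element U of the Clifford algebra Cl(Q), the sum U + involute(U) + reverse(U) + reverse(involute(U)) is a scalar, i.e. lies in the range of the algebra map ℝ → Cl(Q). -/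
/-!
The map `U ↦ U + Û + Ũ + Û̃` is linear. It kills every product of an odd number of vectors (the
grade involution negates it), sends `1` to `4` and a product `a b` of two vectors to
`2 (a b + b a) = 2 polar Q a b`. In dimension three every element is a combination of products of
at most three vectors: a product of basis vectors can be rewritten with pairwise distinct factors,
since `e j` anticommutes past `e i` up to a scalar until it meets its copy, where it squares to a
scalar.
-/

namespace CliffordAlgebra

variable {R M I : Type*} [CommRing R] [AddCommGroup M] [Module R M] {Q : QuadraticForm R M}

variable (Q) in
def monomialSpan (e : I → M) (s : Set I) : Submodule R (CliffordAlgebra Q) :=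
  Submodule.span R
    {x | ∃ t : List I, t.Nodup ∧ (∀ i ∈ t, i ∈ s) ∧ (t.map fun i => ι Q (e i)).prod = x}

theorem monomialSpan_mono (e : I → M) {s s' : Set I} (h : s ⊆ s') :
    monomialSpan Q e s ≤ monomialSpan Q e s' :=
  Submodule.span_mono fun _ ⟨t, ht, hts, hx⟩ => ⟨t, ht, fun i hi => h (hts i hi), hx⟩

theorem prod_mem_monomialSpan (e : I → M) {s : Set I} {t : List I} (ht : t.Nodup)
    (hts : ∀ i ∈ t, i ∈ s) : (t.map fun i => ι Q (e i)).prod ∈ monomialSpan Q e s :=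
  Submodule.subset_span ⟨t, ht, hts, rfl⟩

theorem ι_mul_mem_monomialSpan_insert (e : I → M) {s : Set I} {i : I} (hi : i ∉ s)
    {x : CliffordAlgebra Q} (hx : x ∈ monomialSpan Q e s) :
    ι Q (e i) * x ∈ monomialSpan Q e (insert i s) := by
  refine (Submodule.span_le (p := (monomialSpan Q e (insert i s)).comap
    (LinearMap.mulLeft R (ι Q (e i))))).2 ?_ hx
  rintro _ ⟨t, ht, hts, rfl⟩
  refine prod_mem_monomialSpan e (t := i :: t)
    (List.nodup_cons.2 ⟨fun h => hi (hts i h), ht⟩) ?_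
  simpa using fun k hk => Or.inr (hts k hk)

theorem ι_mul_prod_mem_monomialSpan (e : I → M) (j : I) {l : List I} (hl : l.Nodup) :
    ι Q (e j) * (l.map fun i => ι Q (e i)).prod ∈ monomialSpan Q e {k | k = j ∨ k ∈ l} := by
  induction l with
  | nil => simpa using prod_mem_monomialSpan (Q := Q) e (t := [j]) (by simp) (by simp)
  | cons i l ih =>
    obtain ⟨hil, hl⟩ := List.nodup_cons.1 hl
    have hl' : (l.map fun i => ι Q (e i)).prod ∈ monomialSpan Q e {k | k = j ∨ k ∈ i :: l} :=
      prod_mem_monomialSpan e hl fun k hk => Or.inr (List.mem_cons_of_mem _ hk)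
    rw [List.map_cons, List.prod_cons, ← mul_assoc]
    by_cases hji : j = i
    · rw [hji, ι_sq_scalar, ← Algebra.smul_def]
      exact Submodule.smul_mem _ _ (hji ▸ hl')
    · rw [ι_mul_ι_comm, sub_mul, ← Algebra.smul_def, mul_assoc]
      refine sub_mem (Submodule.smul_mem _ _ hl') (monomialSpan_mono e ?_
        (ι_mul_mem_monomialSpan_insert e (by simp [Ne.symm hji, hil]) (ih hl)))
      rintro k (rfl | rfl | hk) <;> simp_all

theorem ι_mul_mem_monomialSpan_univ (e : I → M) (he : Submodule.span R (Set.range e) = ⊤)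
    (m : M) : ∀ x ∈ monomialSpan Q e Set.univ, ι Q m * x ∈ monomialSpan Q e Set.univ := by
  have hm : m ∈ Submodule.span R (Set.range e) := he ▸ Submodule.mem_top
  induction hm using Submodule.span_induction with
  | mem _ hm =>
    obtain ⟨j, rfl⟩ := hm
    intro x hx
    refine (Submodule.span_le (p := (monomialSpan Q e Set.univ).comap
      (LinearMap.mulLeft R (ι Q (e j))))).2 ?_ hx
    rintro _ ⟨t, ht, -, rfl⟩
    exact monomialSpan_mono e (Set.subset_univ _) (ι_mul_prod_mem_monomialSpan e j ht)
  | zero => simp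
  | add _ _ _ _ h₁ h₂ =>
    intro x hx
    rw [map_add, add_mul]
    exact add_mem (h₁ x hx) (h₂ x hx)
  | smul _ _ _ h =>
    intro x hx
    rw [map_smul, smul_mul_assoc]
    exact Submodule.smul_mem _ _ (h x hx)

theorem monomialSpan_univ_eq_top (e : I → M) (he : Submodule.span R (Set.range e) = ⊤) :
    monomialSpan Q e Set.univ = ⊤ := by
  refine Submodule.eq_top_iff'.2 fun x => ?_
  induction x using left_induction with
  | algebraMap r =>
    rw [Algebra.algebraMap_eq_smul_one]
    exact Submodule.smul_mem _ _ (prod_mem_monomialSpan (t := []) e List.nodup_nil (by simp))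
  | add _ _ hx hy => exact add_mem hx hy
  | ι_mul x m hx => exact ι_mul_mem_monomialSpan_univ e he m x hx

variable (Q) in
def involuteReverseSum : CliffordAlgebra Q →ₗ[R] CliffordAlgebra Q :=
  LinearMap.id + involute.toLinearMap + reverse + reverse ∘ₗ involute.toLinearMap

theorem involuteReverseSum_apply (x : CliffordAlgebra Q) :
    involuteReverseSum Q x = x + involute x + reverse x + reverse (involute x) :=
  rfl

theorem involuteReverseSum_eq_zero_of_involute_eq_neg {x : CliffordAlgebra Q}
    (hx : involute x = -x) : involuteReverseSum Q x = 0 := by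
  rw [involuteReverseSum_apply, hx, map_neg]
  abel

theorem involuteReverseSum_one : involuteReverseSum Q 1 = algebraMap R _ 4 := by
  rw [involuteReverseSum_apply, map_one, reverse.map_one, map_ofNat]
  norm_num

theorem involuteReverseSum_ι_mul_ι (a b : M) :
    involuteReverseSum Q (ι Q a * ι Q b) = algebraMap R _ (2 * QuadraticMap.polar Q a b) := by
  rw [involuteReverseSum_apply, map_mul, involute_ι, involute_ι, neg_mul_neg, reverse.map_mul,
    reverse_ι, reverse_ι, map_mul, map_ofNat, two_mul, ← ι_mul_ι_add_swap]
  abel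

theorem involuteReverseSum_prod_mem_one {l : List M} (hl : l.length ≤ 3) :
    involuteReverseSum Q (l.map (ι Q)).prod ∈ (1 : Submodule R (CliffordAlgebra Q)) := by
  have of_odd (hodd : Odd l.length) : involuteReverseSum Q (l.map (ι Q)).prod = 0 :=
    involuteReverseSum_eq_zero_of_involute_eq_neg <| by
      rw [involute_prod_map_ι, hodd.neg_one_pow, neg_one_smul]
  match l, hl with
  | [], _ => exact Submodule.mem_one.2 ⟨4, involuteReverseSum_one.symm⟩
  | [a], _ => exact of_odd ⟨0, rfl⟩ ▸ zero_mem _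
  | [a, b], _ =>
    simp only [List.map_cons, List.map_nil, List.prod_cons, List.prod_nil, mul_one]
    exact Submodule.mem_one.2 ⟨_, (involuteReverseSum_ι_mul_ι a b).symm⟩
  | [a, b, c], _ => exact of_odd ⟨1, rfl⟩ ▸ zero_mem _

theorem involuteReverseSum_mem_one [Fintype I] (e : I → M)
    (he : Submodule.span R (Set.range e) = ⊤) (hI : Fintype.card I ≤ 3)
    (x : CliffordAlgebra Q) :
    involuteReverseSum Q x ∈ (1 : Submodule R (CliffordAlgebra Q)) := by
  have hx : x ∈ monomialSpan Q e Set.univ := monomialSpan_univ_eq_top e he ▸ Submodule.mem_top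
  refine (Submodule.span_le (p := (1 : Submodule R _).comap (involuteReverseSum Q))).2 ?_ hx
  rintro _ ⟨t, ht, -, rfl⟩
  rw [show (t.map fun i => ι Q (e i)) = (t.map e).map (ι Q) by simp]
  exact involuteReverseSum_prod_mem_one ((List.length_map _).trans_le (ht.length_le_card.trans hI))

end CliffordAlgebra

open CliffordAlgebra

theorem stmt_3 {V : Type*} [AddCommGroup V] [Module ℝ V] (Q : QuadraticForm ℝ V)
    (h : Module.finrank ℝ V = 3) (U : CliffordAlgebra Q) :
    U + involute U + reverse U + reverse (involute U) ∈
      Set.range (algebraMap ℝ (CliffordAlgebra Q)) := by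
  have : Module.Finite ℝ V := Module.finite_of_finrank_eq_succ h
  let b := Module.finBasisOfFinrankEq ℝ V h
  exact Submodule.mem_one.1 (involuteReverseSum_mem_one b b.span_eq (by simp) U)
end

section
/- Suppose V has dimension 3 over ℝ. Then for every element U of the Clifford algebra Cl(Q), both U + reverse(involute(U)) and involute(U) + reverse(U) belong to the center of Cl(Q). -/
/-!
Choose a `Q`-orthogonal basis `e₀, e₁, e₂` of `V` and write `γᵢ = ι Q eᵢ`, so that distinct
`γᵢ` anticommute and `γᵢ² = Q eᵢ`. The eight ordered monomials in the `γᵢ` span `Cl(Q)`, and the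
Clifford conjugation `U ↦ reverse (involute U)` fixes `1` and the pseudoscalar `γ₀γ₁γ₂` while
negating the six monomials of degree one and two. Hence `U + reverse (involute U)` is a
combination of `1` and `γ₀γ₁γ₂`, which is central because in odd dimension it commutes with each
`γᵢ`. The second element is the image of the first under the automorphism `involute`.
-/

open CliffordAlgebra

theorem Submodule.span_eq_top_of_mul_mem_of_adjoin_eq_top {R A : Type*} [CommSemiring R]
    [Semiring A] [Algebra R A] {s S : Set A} (hs : Algebra.adjoin R s = ⊤) (h1 : 1 ∈ S)
    (hmul : ∀ a ∈ s, ∀ g ∈ S, a * g ∈ span R S) : span R S = ⊤ := by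
  refine eq_top_iff'.mpr fun a => ?_
  have ha : a ∈ Algebra.adjoin R s := hs ▸ Algebra.mem_top
  suffices ∀ n ∈ span R S, a * n ∈ span R S by simpa using this 1 (subset_span h1)
  induction ha using Algebra.adjoin_induction with
  | mem a ha =>
    exact fun _ hn => (span_le (p := (span R S).comap (LinearMap.mulLeft R a))).mpr (hmul a ha) hn
  | algebraMap r => exact fun n hn => Algebra.smul_def r n ▸ smul_mem _ r hn
  | add a b _ _ ha hb => exact fun n hn => (add_mul a b n).symm ▸ add_mem (ha n hn) (hb n hn)
  | mul a b _ _ ha hb => exact fun n hn => (mul_assoc a b n).symm ▸ ha _ (hb n hn)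

theorem Subalgebra.mem_center_of_adjoin_eq_top {R A : Type*} [CommSemiring R] [Semiring A]
    [Algebra R A] {s : Set A} (hs : Algebra.adjoin R s = ⊤) {z : A}
    (hz : ∀ a ∈ s, a * z = z * a) : z ∈ Subalgebra.center R A := by
  refine Subalgebra.mem_center_iff.mpr fun b => ?_
  have hb : b ∈ Subalgebra.centralizer R (Subalgebra.centralizer R s) :=
    Algebra.adjoin_le_centralizer_centralizer R s (hs ▸ Algebra.mem_top)
  exact (hb z hz).symm

theorem QuadraticForm.exists_basis_pairwise_isOrtho {K V : Type*} [Field K] [Invertible (2 : K)]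
    [AddCommGroup V] [Module K V] [FiniteDimensional K V] (Q : QuadraticForm K V) :
    ∃ b : Module.Basis (Fin (Module.finrank K V)) K V,
      Pairwise fun i j => Q.IsOrtho (b i) (b j) := by
  obtain ⟨b, hb⟩ := LinearMap.BilinForm.exists_orthogonal_basis (associated_isSymm K Q)
  exact ⟨b, fun i j hij => QuadraticMap.associated_isOrtho.mp (hb hij)⟩

namespace CliffordAlgebra

variable {R M : Type*} [CommRing R] [AddCommGroup M] [Module R M] {Q : QuadraticForm R M}

theorem adjoin_range_ι_comp_eq_top {κ : Type*} {e : κ → M}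
    (hspan : Submodule.span R (Set.range e) = ⊤) :
    Algebra.adjoin R (Set.range (ι Q ∘ e)) = ⊤ := by
  refine eq_top_iff.mpr (adjoin_range_ι (Q := Q) ▸ Algebra.adjoin_le ?_)
  rintro _ ⟨v, rfl⟩
  have hv : ι Q v ∈ Submodule.span R (Set.range (ι Q ∘ e)) := by
    rw [Set.range_comp, Submodule.span_image, hspan]
    exact Submodule.mem_map_of_mem Submodule.mem_top
  exact Algebra.span_le_adjoin R _ hv

theorem ι_mul_ι_mul_self (m : M) (x : CliffordAlgebra Q) : ι Q m * (ι Q m * x) = Q m • x := by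
  rw [← mul_assoc, ι_sq_scalar, Algebra.smul_def]

theorem involute_add_reverse (x : CliffordAlgebra Q) :
    involute x + reverse x = involute (x + reverse (involute x)) := by
  rw [map_add, reverse_involute, involute_involute]

section Orthogonal

variable {κ : Type*} [LinearOrder κ] {e : κ → M}

-- Stated for `j < i` rather than `i ≠ j` so that, used by `simp`, they sort products into
-- increasing order instead of looping.
theorem ι_mul_ι_of_lt (he : Pairwise fun i j => Q.IsOrtho (e i) (e j)) {i j : κ} (hij : j < i) :
    ι Q (e i) * ι Q (e j) = -(ι Q (e j) * ι Q (e i)) :=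
  ι_mul_ι_comm_of_isOrtho (he hij.ne')

theorem ι_mul_ι_mul_of_lt (he : Pairwise fun i j => Q.IsOrtho (e i) (e j)) {i j : κ} (hij : j < i)
    (x : CliffordAlgebra Q) : ι Q (e i) * (ι Q (e j) * x) = -(ι Q (e j) * (ι Q (e i) * x)) :=
  ι_mul_ι_mul_of_isOrtho x (he hij.ne')

end Orthogonal

section Dimension3

variable {e : Fin 3 → M}

local notation "γ" i:max => ι Q (e i)

theorem ι_mul_ι_mul_ι_mem_center (he : Pairwise fun i j => Q.IsOrtho (e i) (e j))
    (hspan : Submodule.span R (Set.range e) = ⊤) :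
    γ 0 * γ 1 * γ 2 ∈ Subalgebra.center R (CliffordAlgebra Q) := by
  refine Subalgebra.mem_center_of_adjoin_eq_top (adjoin_range_ι_comp_eq_top hspan) ?_
  rintro _ ⟨i, rfl⟩
  fin_cases i <;>
    simp only [Function.comp_apply, Fin.zero_eta, Fin.mk_one, Fin.reduceFinMk, Fin.reduceLT,
      mul_assoc, ι_mul_ι_of_lt he, ι_mul_ι_mul_of_lt he, ι_mul_ι_mul_self, ι_sq_scalar, mul_neg,
      neg_neg, mul_smul_comm]

theorem span_ι_monomials_eq_top (he : Pairwise fun i j => Q.IsOrtho (e i) (e j))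
    (hspan : Submodule.span R (Set.range e) = ⊤) :
    Submodule.span R {1, γ 0, γ 1, γ 2, γ 0 * γ 1, γ 0 * γ 2, γ 1 * γ 2, γ 0 * γ 1 * γ 2} = ⊤ := by
  refine Submodule.span_eq_top_of_mul_mem_of_adjoin_eq_top (adjoin_range_ι_comp_eq_top hspan)
    (by simp) ?_
  rintro _ ⟨i, rfl⟩ g hg
  simp only [Set.mem_insert_iff, Set.mem_singleton_iff] at hg
  rcases hg with rfl | rfl | rfl | rfl | rfl | rfl | rfl | rfl <;> fin_cases i <;>
    simp only [Function.comp_apply, Fin.zero_eta, Fin.mk_one, Fin.reduceFinMk, Fin.reduceLT,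
      mul_one, mul_assoc, ι_mul_ι_of_lt he, ι_mul_ι_mul_of_lt he, ι_mul_ι_mul_self, ι_sq_scalar,
      mul_neg, neg_neg, mul_smul_comm, Algebra.algebraMap_eq_smul_one] <;>
    (try rw [Submodule.neg_mem_iff]) <;> (try apply Submodule.smul_mem) <;>
    exact Submodule.subset_span (by simp)

theorem add_reverse_involute_mem_center (he : Pairwise fun i j => Q.IsOrtho (e i) (e j))
    (hspan : Submodule.span R (Set.range e) = ⊤) (x : CliffordAlgebra Q) :
    x + reverse (involute x) ∈ Subalgebra.center R (CliffordAlgebra Q) := by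
  have hω := mul_assoc (γ 0) (γ 1) (γ 2) ▸ ι_mul_ι_mul_ι_mem_center he hspan
  have hx := Submodule.eq_top_iff'.mp (span_ι_monomials_eq_top he hspan) x
  refine (Submodule.span_le (p := (Subalgebra.center R _).toSubmodule.comap
    (LinearMap.id + reverse ∘ₗ involute.toLinearMap))).mpr ?_ hx
  intro g hg
  simp only [Set.mem_insert_iff, Set.mem_singleton_iff] at hg
  rcases hg with rfl | rfl | rfl | rfl | rfl | rfl | rfl | rfl <;>
    simp only [SetLike.mem_coe, Submodule.mem_comap, Subalgebra.mem_toSubmodule,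
      LinearMap.add_apply, LinearMap.id_apply, LinearMap.comp_apply, AlgHom.toLinearMap_apply,
      map_one, map_mul, involute_ι, reverse.map_one, reverse.map_mul, reverse.map_neg, reverse_ι,
      Fin.reduceLT, mul_assoc, ι_mul_ι_of_lt he, ι_mul_ι_mul_of_lt he, mul_neg, neg_mul, neg_neg,
      add_neg_cancel] <;>
    first
    | exact zero_mem _
    | exact add_mem (one_mem _) (one_mem _)
    | exact add_mem hω hω

end Dimension3

end CliffordAlgebra

theorem stmt_4 {V : Type*} [AddCommGroup V] [Module ℝ V] (Q : QuadraticForm ℝ V)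
    (h : Module.finrank ℝ V = 3) (U : CliffordAlgebra Q) :
    U + reverse (involute U) ∈ Subalgebra.center ℝ (CliffordAlgebra Q) ∧
    involute U + reverse U ∈ Subalgebra.center ℝ (CliffordAlgebra Q) := by
  have : FiniteDimensional ℝ V := Module.finite_of_finrank_eq_succ h
  obtain ⟨b, hb⟩ := Q.exists_basis_pairwise_isOrtho
  let e := b.reindex (finCongr h)
  have he : Pairwise fun i j => Q.IsOrtho (e i) (e j) := fun i j hij => by
    simpa [e] using hb ((finCongr h).symm.injective.ne hij)
  have hconj := add_reverse_involute_mem_center he e.span_eq U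
  exact ⟨hconj, involute_add_reverse U ▸ MulEquivClass.apply_mem_center involuteEquiv hconj⟩
end

section
/- Suppose V has dimension 2 over ℝ. Then for every element U of the Clifford algebra Cl(Q), the four products U·reverse(involute(U)), reverse(involute(U))·U, involute(U)·reverse(U), and reverse(U)·involute(U) are all equal, and this common element is a scalar, i.e. lies in the range of the algebra map ℝ → Cl(Q). -/
/-!
A two-dimensional real quadratic form diagonalises, so `Cl(Q)` is isomorphic to a quaternion
algebra `ℍ[ℝ, c₁, 0, c₂]`, and the isomorphism carries Clifford conjugation `star = reverse ∘ involute`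
to quaternion conjugation. Quaternions are normal with `a * star a` a scalar (the reduced norm), so
the same holds in `Cl(Q)`. For `Û = involute U` we have `star Û = reverse U`, and
`Û * star Û = involute (U * star U)` is the involute of a scalar, hence equal to `U * star U`.
-/

open CliffordAlgebra

namespace CliffordAlgebra

section Star

variable {R M₁ M₂ : Type*} [CommRing R] [AddCommGroup M₁] [AddCommGroup M₂] [Module R M₁]
  [Module R M₂] {Q₁ : QuadraticForm R M₁} {Q₂ : QuadraticForm R M₂}

theorem involute_star (x : CliffordAlgebra Q₁) : involute (star x) = star (involute x) := by
  rw [star_def x, star_def' (involute x)]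

theorem map_star (f : Q₁ →qᵢ Q₂) (x : CliffordAlgebra Q₁) : map f (star x) = star (map f x) := by
  simp only [star_def]
  induction x using CliffordAlgebra.induction with
  | algebraMap r => simp
  | ι x => simp
  | mul x₁ x₂ hx₁ hx₂ => simp [hx₁, hx₂]
  | add x₁ x₂ hx₁ hx₂ => simp [hx₁, hx₂]

theorem isStarNormal_of_isometryEquiv (e : Q₁.IsometryEquiv Q₂)
    (hnormal : ∀ y : CliffordAlgebra Q₂, IsStarNormal y) (x : CliffordAlgebra Q₁) :
    IsStarNormal x :=
  ⟨(equivOfIsometry e).injective <| by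
    change map e.toIsometry (star x * x) = map e.toIsometry (x * star x)
    rw [map_mul, map_mul, map_star, (hnormal _).star_comm_self.eq]⟩

theorem mul_star_mem_range_algebraMap_of_isometryEquiv (e : Q₁.IsometryEquiv Q₂)
    (hscalar : ∀ y : CliffordAlgebra Q₂, y * star y ∈ Set.range (algebraMap R _))
    (x : CliffordAlgebra Q₁) : x * star x ∈ Set.range (algebraMap R (CliffordAlgebra Q₁)) := by
  obtain ⟨r, hr⟩ := hscalar (map e.toIsometry x)
  refine ⟨r, (equivOfIsometry e).injective ?_⟩
  rw [AlgEquiv.commutes, hr]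
  change _ = map e.toIsometry (x * star x)
  rw [map_mul, map_star]

end Star

variable {R M : Type*} [CommRing R] [AddCommGroup M] [Module R M] {Q : QuadraticForm R M}

theorem mul_star_eq_and_mem_range_of_isStarNormal
    (hnormal : ∀ x : CliffordAlgebra Q, IsStarNormal x)
    (hscalar : ∀ x : CliffordAlgebra Q, x * star x ∈ Set.range (algebraMap R _))
    (U : CliffordAlgebra Q) :
    U * reverse (involute U) = reverse (involute U) * U ∧
    U * reverse (involute U) = involute U * reverse U ∧
    U * reverse (involute U) = reverse U * involute U ∧
    U * reverse (involute U) ∈ Set.range (algebraMap R (CliffordAlgebra Q)) := by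
  have hstar_involute : star (involute U) = reverse U := by rw [star_def, involute_involute]
  have hinvolute : involute U * star (involute U) = U * star U := by
    obtain ⟨r, hr⟩ := hscalar U
    rw [← involute_star, ← map_mul, ← hr, AlgHom.commutes]
  rw [← star_def, ← hstar_involute]
  exact ⟨(hnormal U).star_comm_self.symm, hinvolute.symm,
    ((hnormal _).star_comm_self.trans hinvolute).symm, hscalar U⟩

end CliffordAlgebra

namespace CliffordAlgebraQuaternion

open QuaternionAlgebra

variable {R : Type*} [CommRing R] {c₁ c₂ : R}

instance (x : CliffordAlgebra (Q c₁ c₂)) : IsStarNormal x :=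
  ⟨CliffordAlgebraQuaternion.equiv.injective <| by
    simp only [map_mul, equiv_apply, toQuaternion_star, star_comm_self']⟩

theorem mul_star_mem_range_algebraMap (x : CliffordAlgebra (Q c₁ c₂)) :
    x * star x ∈ Set.range (algebraMap R (CliffordAlgebra (Q c₁ c₂))) := by
  refine ⟨(toQuaternion x * star (toQuaternion x)).re,
    CliffordAlgebraQuaternion.equiv.injective ?_⟩
  rw [AlgEquiv.commutes, coe_algebraMap, map_mul, equiv_apply, equiv_apply, toQuaternion_star,
    ← mul_star_eq_coe]

def weightedSumSquaresIsometryEquivQ (w : Fin 2 → R) :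
    (QuadraticMap.weightedSumSquares R w).IsometryEquiv (Q (w 0) (w 1)) where
  toLinearEquiv := LinearEquiv.piFinTwo R (fun _ => R)
  map_app' v := by simp [Fin.sum_univ_two]

end CliffordAlgebraQuaternion

theorem QuadraticForm.exists_isometryEquiv_quaternionQ_of_finrank_eq_two {K V : Type*} [Field K]
    [Invertible (2 : K)] [AddCommGroup V] [Module K V] [FiniteDimensional K V]
    (Q : QuadraticForm K V) (h : Module.finrank K V = 2) :
    ∃ c₁ c₂ : K, Nonempty (Q.IsometryEquiv (CliffordAlgebraQuaternion.Q c₁ c₂)) := by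
  obtain ⟨w, ⟨e⟩⟩ := Q.equivalent_weightedSumSquares
  generalize Module.finrank K V = n at w e h
  subst h
  exact ⟨w 0, w 1, ⟨e.trans (CliffordAlgebraQuaternion.weightedSumSquaresIsometryEquivQ w)⟩⟩

theorem stmt_8 {V : Type*} [AddCommGroup V] [Module ℝ V] (Q : QuadraticForm ℝ V)
    (h : Module.finrank ℝ V = 2) (U : CliffordAlgebra Q) :
    U * reverse (involute U) = reverse (involute U) * U ∧
    U * reverse (involute U) = involute U * reverse U ∧
    U * reverse (involute U) = reverse U * involute U ∧
    U * reverse (involute U) ∈ Set.range (algebraMap ℝ (CliffordAlgebra Q)) := by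
  have : FiniteDimensional ℝ V := Module.finite_of_finrank_eq_succ h
  obtain ⟨c₁, c₂, ⟨e⟩⟩ := Q.exists_isometryEquiv_quaternionQ_of_finrank_eq_two h
  exact mul_star_eq_and_mem_range_of_isStarNormal
    (isStarNormal_of_isometryEquiv e fun _ => inferInstance)
    (mul_star_mem_range_algebraMap_of_isometryEquiv e
      CliffordAlgebraQuaternion.mul_star_mem_range_algebraMap) U
end

section
/- Suppose V has dimension 2 over ℝ, and for U in the Clifford algebra Cl(Q) write N(U) := U·reverse(involute(U)). Then: (i) N is multiplicative, i.e. N(U·V) = N(U)·N(V) for all U, V in Cl(Q); (ii) an element U of Cl(Q) is a unit if and only if N(U) ≠ 0. -/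
open CliffordAlgebra

theorem stmt_10 {M : Type*} [AddCommGroup M] [Module ℝ M] (Q : QuadraticForm ℝ M)
    (h : Module.finrank ℝ M = 2) :
    (∀ U V : CliffordAlgebra Q,
      (U * V) * reverse (involute (U * V)) =
        (U * reverse (involute U)) * (V * reverse (involute V))) ∧
    (∀ U : CliffordAlgebra Q, IsUnit U ↔ U * reverse (involute U) ≠ 0) := by
  have hfin : Module.Finite ℝ M := Module.finite_of_finrank_eq_succ h
  letI : Invertible (2 : ℝ) := invertibleOfNonzero two_ne_zero
  have key : ∀ U : CliffordAlgebra Q, ∃ s : ℝ,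
      U * reverse (involute U) = algebraMap ℝ _ s ∧
      reverse (involute U) * U = algebraMap ℝ _ s := by
    let bb := Module.finBasisOfFinrankEq ℝ M h
    set X := ι Q (bb 0) with hX
    set Y := ι Q (bb 1) with hY
    set q₁ := Q (bb 0) with hq₁
    set q₂ := Q (bb 1) with hq₂
    set p := QuadraticMap.polar Q (bb 0) (bb 1) with hp
    have hXX : X * X = q₁ • (1 : CliffordAlgebra Q) := by
      rw [hX, ι_sq_scalar, Algebra.algebraMap_eq_smul_one]
    have hYY : Y * Y = q₂ • (1 : CliffordAlgebra Q) := by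
      rw [hY, ι_sq_scalar, Algebra.algebraMap_eq_smul_one]
    have hYX : Y * X = p • (1 : CliffordAlgebra Q) - X * Y := by
      rw [hY, hX, ι_mul_ι_comm, Algebra.algebraMap_eq_smul_one]
      rw [QuadraticMap.polar_comm]
    have hXXz : ∀ z, X * (X * z) = q₁ • z := fun z => by
      rw [← mul_assoc, hXX, smul_mul_assoc, one_mul]
    have hYYz : ∀ z, Y * (Y * z) = q₂ • z := fun z => by
      rw [← mul_assoc, hYY, smul_mul_assoc, one_mul]
    have hYXz : ∀ z, Y * (X * z) = p • z - X * (Y * z) := fun z => by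
      rw [← mul_assoc, hYX, sub_mul, smul_mul_assoc, one_mul, mul_assoc]
    set S := Submodule.span ℝ (Set.range ![(1 : CliffordAlgebra Q), X, Y, X * Y]) with hS
    have m0 : (1 : CliffordAlgebra Q) ∈ S := Submodule.subset_span ⟨0, rfl⟩
    have m1 : X ∈ S := Submodule.subset_span ⟨1, rfl⟩
    have m2 : Y ∈ S := Submodule.subset_span ⟨2, rfl⟩
    have m3 : X * Y ∈ S := Submodule.subset_span ⟨3, rfl⟩
    have hrange : Set.range ![(1 : CliffordAlgebra Q), X, Y, X * Y]
        = ({1, X, Y, X * Y} : Set (CliffordAlgebra Q)) := by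
      ext z
      simp [Matrix.range_cons, Matrix.range_cons_empty]
      tauto
    have hmul : ∀ x ∈ S, ∀ y ∈ S, x * y ∈ S := by
      refine Submodule.mul_le.mp ?_
      conv_lhs => rw [hS, hrange]
      rw [Submodule.span_mul_span]
      refine Submodule.span_le.mpr (Set.mul_subset_iff.mpr ?_)
      intro x hx y hy
      rw [SetLike.mem_coe]
      simp only [Set.mem_insert_iff, Set.mem_singleton_iff] at hx hy
      rcases hx with rfl | rfl | rfl | rfl <;> rcases hy with rfl | rfl | rfl | rfl
      all_goals try simp only [one_mul, mul_one, mul_assoc, hXXz, hYYz, hYXz, hXX, hYY, hYX,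
        mul_smul_comm, smul_mul_assoc, mul_sub, mul_add, smul_sub, smul_add, smul_smul]
      all_goals solve_by_elim [Submodule.add_mem, Submodule.sub_mem, Submodule.smul_mem,
        m0, m1, m2, m3]
    intro U
    have hU : U ∈ S := by
      induction U using CliffordAlgebra.induction with
      | algebraMap r => rw [Algebra.algebraMap_eq_smul_one]; exact S.smul_mem r m0
      | ι m =>
        have hm : m = bb.repr m 0 • bb 0 + bb.repr m 1 • bb 1 := by
          have h2 := bb.sum_repr m
          rw [Fin.sum_univ_two] at h2
          exact h2.symm
        rw [hm, map_add, map_smul, map_smul, ← hX, ← hY]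
        exact S.add_mem (S.smul_mem _ m1) (S.smul_mem _ m2)
      | add x y hx hy => exact S.add_mem hx hy
      | mul x y hx hy => exact hmul x hx y hy
    rw [hS] at hU
    obtain ⟨cf, hcf⟩ := (Submodule.mem_span_range_iff_exists_fun ℝ).mp hU
    rw [Fin.sum_univ_four] at hcf
    simp only [Matrix.cons_val_zero, Matrix.cons_val_one, Matrix.head_cons,
      Matrix.cons_val_two, Matrix.tail_cons, Matrix.cons_val_three, Fin.isValue] at hcf
    have hconj : reverse (involute U) =
        cf 0 • (1 : CliffordAlgebra Q) - cf 1 • X - cf 2 • Y + cf 3 • (Y * X) := by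
      rw [← hcf]
      simp only [map_add, map_smul, map_one, map_mul, hX, hY, involute_ι,
        reverse.map_mul, reverse.map_one, reverse_ι, map_neg, neg_mul_neg, smul_neg]
      module
    refine ⟨cf 0 ^ 2 + cf 0 * cf 3 * p - cf 1 ^ 2 * q₁ - cf 1 * cf 2 * p
      - cf 2 ^ 2 * q₂ + cf 3 ^ 2 * (q₁ * q₂), ?_, ?_⟩ <;>
      rw [hconj, ← hcf, Algebra.algebraMap_eq_smul_one] <;>
      simp only [hYX, mul_add, add_mul, mul_sub, sub_mul, smul_mul_assoc, mul_smul_comm,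
        smul_smul, smul_sub, smul_add, mul_one, one_mul, mul_assoc, hXXz, hYYz, hYXz,
        hXX, hYY] <;>
      module
  refine ⟨?_, ?_⟩
  · intro U V
    obtain ⟨s, hs1, _⟩ := key U
    obtain ⟨t, ht1, _⟩ := key V
    rw [map_mul, reverse.map_mul, show U * V * (reverse (involute V) * reverse (involute U))
        = U * (V * reverse (involute V)) * reverse (involute U) by
      rw [mul_assoc, mul_assoc, mul_assoc], ht1, mul_assoc, Algebra.commutes, ← mul_assoc,
      hs1]
  · intro U
    obtain ⟨s, hs1, hs2⟩ := key U
    constructor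
    · intro hU h0
      have hc : reverse (involute U) = 0 := (hU.mul_right_eq_zero).mp h0
      have hU0 : U = 0 := by
        have hcc : reverse (involute (reverse (involute U))) = U := by
          simp only [reverse_involute, reverse_reverse, involute_involute]
        rw [hc] at hcc
        simpa using hcc.symm
      rw [hU0] at hU
      exact not_isUnit_zero hU
    · intro hN
      rw [hs1] at hN
      have hs0 : s ≠ 0 := fun e => hN (by rw [e, map_zero])
      refine ⟨⟨U, s⁻¹ • reverse (involute U), ?_, ?_⟩, rfl⟩
      · rw [mul_smul_comm, hs1, Algebra.smul_def, ← map_mul, inv_mul_cancel₀ hs0, map_one]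
      · rw [smul_mul_assoc, hs2, Algebra.smul_def, ← map_mul, inv_mul_cancel₀ hs0, map_one]
end

section
/- Suppose V has dimension 3 over ℝ. Then for every element U of the Clifford algebra Cl(Q), writing Û = involute(U), Ũ = reverse(U), Û̃ = reverse(involute(U)), the following four sums are all equal and each is a scalar (lies in the range of the algebra map ℝ → Cl(Q)): U·Ũ·Û̃·Û + Ũ·U·Û·Û̃ = U·Û·Û̃·Ũ + Û·U·Ũ·Û̃ = Û̃·Ũ·U·Û + Ũ·Û̃·Û·U = Û·Û̃·Ũ·U + Û̃·Û·U·Ũ. -/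
/-!
Write `x⋆ = reverse (involute x)` for the Clifford conjugate and `t x = x + x⋆`. In a ring with an
anti-involution whose traces `t x` are all central, `x⋆ = t x - x` forces `t (x y) = t (y x)`.
With `a = U` and `b = Ũ` (so `a⋆ = Û̃` and `b⋆ = Û`) each of the four sums is `t` of a word
that cyclic rotation and conjugation carry to `b a b⋆ a⋆`, so all four are equal.

If `dim V = 3`, pick an orthogonal basis `e₀, e₁, e₂`. The eight monomials in the `eᵢ` span
`Cl(Q)`, and conjugation fixes `1` and `e₀e₁e₂` and negates the other six, so every `t x` lies
in the span of `1` and `e₀e₁e₂`, which is central. The common value of the sums is such a `t x`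
and is fixed by `reverse`, which negates `e₀e₁e₂`; hence it is a scalar.
-/

open CliffordAlgebra

section StarRing

variable {A : Type*} [Ring A] [StarRing A]

theorem add_star_mul_comm (h : ∀ x y : A, Commute (x + star x) y) (x y : A) :
    x * y + star (x * y) = y * x + star (y * x) := by
  obtain ⟨s, hs, hx⟩ : ∃ s, (∀ z, Commute s z) ∧ star x = s - x := ⟨_, h x, by abel⟩
  obtain ⟨t, ht, hy⟩ : ∃ t, (∀ z, Commute t z) ∧ star y = t - y := ⟨_, h y, by abel⟩
  rw [star_mul, star_mul, hx, hy]
  simp only [mul_sub, sub_mul, (hs y).eq, (ht x).eq, (hs t).eq]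
  abel

theorem four_sums_eq_of_commute_add_star (h : ∀ x y : A, Commute (x + star x) y) (a b : A) :
    (a * b * star a * star b + b * a * star b * star a =
      a * star b * star a * b + star b * a * b * star a) ∧
    (a * star b * star a * b + star b * a * b * star a =
      star a * b * a * star b + b * star a * star b * a) ∧
    (star a * b * a * star b + b * star a * star b * a =
      star b * star a * b * a + star a * star b * a * b) := by
  have h2 := add_star_mul_comm h (a * star b * star a) b
  have h3 := add_star_mul_comm h (star a) (b * a * star b)
  have h4 := add_star_mul_comm h (star b * star a) (b * a)
  simp only [star_mul, star_star, mul_assoc] at h2 h3 h4 ⊢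
  exact ⟨by rw [h2, add_comm], by rw [h2, h3], by rw [h3, h4]⟩

end StarRing

theorem commute_mul_mul_of_anticommute {A : Type*} [Ring A] {x y z : A}
    (hxy : y * x = -(x * y)) (hxz : z * x = -(x * z)) (hyz : z * y = -(y * z)) :
    Commute (x * y * z) x ∧ Commute (x * y * z) y ∧ Commute (x * y * z) z := by
  have lxy (w : A) : y * (x * w) = -(x * (y * w)) := by rw [← mul_assoc, hxy, neg_mul, mul_assoc]
  have lxz (w : A) : z * (x * w) = -(x * (z * w)) := by rw [← mul_assoc, hxz, neg_mul, mul_assoc]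
  have lyz (w : A) : z * (y * w) = -(y * (z * w)) := by rw [← mul_assoc, hyz, neg_mul, mul_assoc]
  refine ⟨?_, ?_, ?_⟩ <;>
    simp only [Commute, SemiconjBy, mul_assoc, hxz, hyz, lxy, lxz, lyz, mul_neg, neg_neg]

theorem QuadraticForm.exists_basis_isOrtho {K V : Type*} [Field K] [Invertible (2 : K)]
    [AddCommGroup V] [Module K V] [FiniteDimensional K V] (Q : QuadraticForm K V) {n : ℕ}
    (hn : Module.finrank K V = n) :
    ∃ b : Module.Basis (Fin n) K V, ∀ i j, i ≠ j → Q.IsOrtho (b i) (b j) := by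
  obtain ⟨v, hv⟩ :=
    LinearMap.BilinForm.exists_orthogonal_basis (QuadraticForm.associated_isSymm K Q)
  subst hn
  exact ⟨v, fun i j hij => QuadraticMap.associated_isOrtho.1 (hv hij)⟩

namespace CliffordAlgebra

variable {R V : Type*} [CommRing R] [AddCommGroup V] [Module R V] {Q : QuadraticForm R V}

theorem reverse_ι_mul_ι_mul_ι {u v w : V} (huv : Q.IsOrtho u v) (huw : Q.IsOrtho u w)
    (hvw : Q.IsOrtho v w) :
    reverse (ι Q u * ι Q v * ι Q w) = -(ι Q u * ι Q v * ι Q w) := by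
  rw [reverse.map_mul, reverse.map_mul, reverse_ι, reverse_ι, reverse_ι,
    ι_mul_ι_mul_of_isOrtho _ hvw.symm, ι_mul_ι_comm_of_isOrtho huw.symm, mul_neg,
    ι_mul_ι_mul_of_isOrtho _ huv.symm, mul_assoc, neg_neg]

theorem star_ι_mul_ι_mul_ι {u v w : V} (huv : Q.IsOrtho u v) (huw : Q.IsOrtho u w)
    (hvw : Q.IsOrtho v w) :
    star (ι Q u * ι Q v * ι Q w) = ι Q u * ι Q v * ι Q w := by
  rw [star_def', reverse_ι_mul_ι_mul_ι huv huw hvw]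
  simp

theorem mem_range_algebraMap_of_reverse_eq [Invertible (2 : R)] {u v w : V}
    (huv : Q.IsOrtho u v) (huw : Q.IsOrtho u w) (hvw : Q.IsOrtho v w) {x : CliffordAlgebra Q}
    (hx : x ∈ Submodule.span R {1, ι Q u * ι Q v * ι Q w}) (hrev : reverse x = x) :
    x ∈ Set.range (algebraMap R (CliffordAlgebra Q)) := by
  obtain ⟨c, d, rfl⟩ := Submodule.mem_span_pair.1 hx
  rw [map_add, map_smul, map_smul, reverse.map_one, reverse_ι_mul_ι_mul_ι huv huw hvw,
    add_right_inj, smul_neg, neg_eq_iff_add_eq_zero, ← two_smul R] at hrev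
  have hd : d • (ι Q u * ι Q v * ι Q w) = 0 := by
    simpa [smul_smul] using congrArg ((⅟2 : R) • ·) hrev
  exact ⟨c, by rw [hd, add_zero, Algebra.algebraMap_eq_smul_one]⟩

section Dimension3

variable (b : Module.Basis (Fin 3) R V)

theorem commute_ι_mul_ι_mul_ι (hb : ∀ i j, i ≠ j → Q.IsOrtho (b i) (b j))
    (y : CliffordAlgebra Q) :
    Commute (ι Q (b 0) * ι Q (b 1) * ι Q (b 2)) y := by
  have anti (i j : Fin 3) (hij : i ≠ j) : ι Q (b j) * ι Q (b i) = -(ι Q (b i) * ι Q (b j)) :=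
    ι_mul_ι_comm_of_isOrtho (hb j i hij.symm)
  obtain ⟨h0, h1, h2⟩ := commute_mul_mul_of_anticommute (anti 0 1 (by decide))
    (anti 0 2 (by decide)) (anti 1 2 (by decide))
  induction y using CliffordAlgebra.induction with
  | algebraMap r => exact Algebra.commute_algebraMap_right r _
  | ι v =>
    rw [← b.sum_repr v, map_sum, Fin.sum_univ_three]
    simp only [map_smul]
    exact ((h0.smul_right _).add_right (h1.smul_right _)).add_right (h2.smul_right _)
  | mul x y hx hy => exact hx.mul_right hy
  | add x y hx hy => exact hx.add_right hy

theorem span_monomials_eq_top (hb : ∀ i j, i ≠ j → Q.IsOrtho (b i) (b j)) :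
    Submodule.span R {1, ι Q (b 0), ι Q (b 1), ι Q (b 2), ι Q (b 0) * ι Q (b 1),
      ι Q (b 0) * ι Q (b 2), ι Q (b 1) * ι Q (b 2), ι Q (b 0) * ι Q (b 1) * ι Q (b 2)} = ⊤ := by
  have sq (i : Fin 3) : ι Q (b i) * ι Q (b i) = Q (b i) • 1 := by
    rw [ι_sq_scalar, Algebra.algebraMap_eq_smul_one]
  have sq' (i : Fin 3) (w : CliffordAlgebra Q) : ι Q (b i) * (ι Q (b i) * w) = Q (b i) • w := by
    rw [← mul_assoc, sq, smul_one_mul]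
  have anti (i j : Fin 3) (hij : i < j) : ι Q (b j) * ι Q (b i) = -(ι Q (b i) * ι Q (b j)) :=
    ι_mul_ι_comm_of_isOrtho (hb j i hij.ne')
  have anti' (i j : Fin 3) (hij : i < j) (w : CliffordAlgebra Q) :
      ι Q (b j) * (ι Q (b i) * w) = -(ι Q (b i) * (ι Q (b j) * w)) :=
    ι_mul_ι_mul_of_isOrtho w (hb j i hij.ne')
  refine Submodule.eq_top_iff'.2 fun x => ?_
  induction x using CliffordAlgebra.left_induction with
  | algebraMap r =>
    rw [Algebra.algebraMap_eq_smul_one]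
    exact Submodule.smul_mem _ r (Submodule.subset_span (by simp))
  | add x y hx hy => exact add_mem hx hy
  | ι_mul x v hx =>
    rw [← b.sum_repr v, map_sum, Finset.sum_mul]
    refine sum_mem fun k _ => ?_
    rw [map_smul, smul_mul_assoc]
    refine Submodule.smul_mem _ _ ?_
    induction hx using Submodule.span_induction with
    | mem m hm =>
      simp only [Set.mem_insert_iff, Set.mem_singleton_iff] at hm
      obtain rfl | rfl | rfl : k = 0 ∨ k = 1 ∨ k = 2 := by fin_cases k <;> simp
      all_goals rcases hm with rfl | rfl | rfl | rfl | rfl | rfl | rfl | rfl <;>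
        (try simp (disch := decide) only [mul_assoc, sq, sq', anti, anti', mul_one, mul_neg,
          mul_smul_comm]) <;>
        (repeat' first | apply Submodule.neg_mem | apply Submodule.smul_mem) <;>
        exact Submodule.subset_span (by simp)
    | zero => simp
    | add x y _ _ hx hy => rw [mul_add]; exact add_mem hx hy
    | smul r x _ hx => rw [mul_smul_comm]; exact Submodule.smul_mem _ r hx

theorem add_star_mem_span (hb : ∀ i j, i ≠ j → Q.IsOrtho (b i) (b j)) (x : CliffordAlgebra Q) :
    x + star x ∈ Submodule.span R {1, ι Q (b 0) * ι Q (b 1) * ι Q (b 2)} := by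
  have hx : x ∈ (⊤ : Submodule R (CliffordAlgebra Q)) := Submodule.mem_top
  rw [← span_monomials_eq_top b hb] at hx
  induction hx using Submodule.span_induction with
  | mem m hm =>
    simp only [Set.mem_insert_iff, Set.mem_singleton_iff] at hm
    rcases hm with rfl | rfl | rfl | rfl | rfl | rfl | rfl | rfl
    · exact add_mem (Submodule.subset_span (by simp)) (Submodule.subset_span (by simp))
    iterate 6 simp [hb]
    · rw [star_ι_mul_ι_mul_ι (hb 0 1 (by decide)) (hb 0 2 (by decide)) (hb 1 2 (by decide))]
      exact add_mem (Submodule.subset_span (by simp)) (Submodule.subset_span (by simp))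
  | zero => simp
  | add x y _ _ hx hy => rw [star_add, add_add_add_comm]; exact add_mem hx hy
  | smul r x _ hx => rw [star_smul, ← smul_add]; exact Submodule.smul_mem _ r hx

theorem commute_add_star (hb : ∀ i j, i ≠ j → Q.IsOrtho (b i) (b j))
    (x y : CliffordAlgebra Q) : Commute (x + star x) y := by
  obtain ⟨c, d, hcd⟩ := Submodule.mem_span_pair.1 (add_star_mem_span b hb x)
  rw [← hcd]
  exact ((Commute.one_left y).smul_left c).add_left ((commute_ι_mul_ι_mul_ι b hb y).smul_left d)

end Dimension3

end CliffordAlgebra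

theorem stmt_14 {V : Type*} [AddCommGroup V] [Module ℝ V] (Q : QuadraticForm ℝ V)
    (h : Module.finrank ℝ V = 3) (U : CliffordAlgebra Q) :
    (U * reverse U * reverse (involute U) * involute U +
        reverse U * U * involute U * reverse (involute U) =
      U * involute U * reverse (involute U) * reverse U +
        involute U * U * reverse U * reverse (involute U)) ∧
    (U * involute U * reverse (involute U) * reverse U +
        involute U * U * reverse U * reverse (involute U) =
      reverse (involute U) * reverse U * U * involute U +
        reverse U * reverse (involute U) * involute U * U) ∧
    (reverse (involute U) * reverse U * U * involute U +
        reverse U * reverse (involute U) * involute U * U =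
      involute U * reverse (involute U) * reverse U * U +
        reverse (involute U) * involute U * U * reverse U) ∧
    U * reverse U * reverse (involute U) * involute U +
        reverse U * U * involute U * reverse (involute U) ∈
      Set.range (algebraMap ℝ (CliffordAlgebra Q)) := by
  have : FiniteDimensional ℝ V := Module.finite_of_finrank_eq_succ h
  obtain ⟨b, hb⟩ := Q.exists_basis_isOrtho h
  obtain ⟨h12, h23, h34⟩ := four_sums_eq_of_commute_add_star (commute_add_star b hb) U (reverse U)
  simp only [star_def', reverse_reverse, ← reverse_involute] at h12 h23 h34
  refine ⟨h12, h23, h34, mem_range_algebraMap_of_reverse_eq (hb 0 1 (by decide))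
    (hb 0 2 (by decide)) (hb 1 2 (by decide)) ?_ ?_⟩
  · simpa only [star_mul, star_def', reverse_reverse, ← reverse_involute, involute_involute,
      mul_assoc] using add_star_mem_span b hb (U * reverse U * reverse (involute U) * involute U)
  · -- `reverse` carries the first sum to the fourth
    conv_rhs => rw [h12, h23, h34]
    simp only [map_add, reverse.map_mul, reverse_reverse, mul_assoc]
    rw [add_comm]
end

section
/- Suppose V has dimension 3 over ℝ. Then for every element U of the Clifford algebra Cl(Q), one has involute(U)·U + reverse(involute(U))·reverse(U) = U·involute(U) + reverse(U)·reverse(involute(U)); equivalently, the commutator [involute(U), U] is fixed by the reversion. -/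
/-!
Write `x̄ = reverse (involute x)` for the Clifford conjugate. Over an orthogonal basis
`e₀, e₁, e₂`, the algebra is spanned by the basis blades, and `x + x̄` is `2` on scalars, `0` on
vectors and bivectors, and `2 e₀e₁e₂` on the pseudoscalar, which commutes with every `eᵢ`. Hence
`x + x̄` is central for every `x`. With `z = Û + Ũ` and `w = U + Ū` central,
`reverse [Û, U] = [Ũ, Ū] = [z - Û, w - U] = [Û, U]`.
-/

open CliffordAlgebra

theorem commutator_eq_of_add_mem_center {A : Type*} [Ring A] {a b a' b' : A}
    (ha : a + a' ∈ Set.center A) (hb : b + b' ∈ Set.center A) :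
    a' * b' - b' * a' = a * b - b * a := by
  obtain ⟨z, hz, rfl⟩ : ∃ z ∈ Set.center A, a' = z - a := ⟨_, ha, by abel⟩
  obtain ⟨w, hw, rfl⟩ : ∃ w ∈ Set.center A, b' = w - b := ⟨_, hb, by abel⟩
  rw [Semigroup.mem_center_iff] at hz hw
  simp only [sub_mul, mul_sub, hz w, hz b, hw a]
  abel

namespace CliffordAlgebra

variable {R M κ : Type*} [CommRing R] [AddCommGroup M] [Module R M] {Q : QuadraticForm R M}

theorem adjoin_range_ι_basis (b : Module.Basis κ R M) :
    Algebra.adjoin R (Set.range fun i => ι Q (b i)) = ⊤ := by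
  rw [eq_top_iff, ← adjoin_range_ι, Algebra.adjoin_le_iff]
  rintro _ ⟨v, rfl⟩
  have h : Submodule.span R (Set.range b) ≤
      (Subalgebra.toSubmodule (Algebra.adjoin R (Set.range fun i => ι Q (b i)))).comap (ι Q) :=
    Submodule.span_le.mpr <| by rintro _ ⟨i, rfl⟩; exact Algebra.subset_adjoin ⟨i, rfl⟩
  rw [b.span_eq] at h
  exact h Submodule.mem_top

theorem mem_center_of_commute_ι_basis (b : Module.Basis κ R M) {z : CliffordAlgebra Q}
    (hz : ∀ i, Commute (ι Q (b i)) z) : z ∈ Subalgebra.center R (CliffordAlgebra Q) := by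
  have h : Algebra.adjoin R (Set.range fun i => ι Q (b i)) ≤ Subalgebra.centralizer R {z} :=
    Algebra.adjoin_le <| by
      rintro _ ⟨i, rfl⟩
      exact (Subalgebra.mem_centralizer_iff R).mpr fun _ hg => hg ▸ (hz i).symm.eq
  rw [adjoin_range_ι_basis] at h
  exact (Subalgebra.mem_center_iff).mpr fun x =>
    ((Subalgebra.mem_centralizer_iff R).mp (h Algebra.mem_top) z rfl).symm

theorem span_eq_top_of_ι_basis_mul_mem (b : Module.Basis κ R M) {S : Set (CliffordAlgebra Q)}
    (h1 : 1 ∈ S) (hS : ∀ i, ∀ s ∈ S, ι Q (b i) * s ∈ Submodule.span R S) :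
    Submodule.span R S = ⊤ := by
  have hmul : ∀ x, ∀ y ∈ Submodule.span R S, x * y ∈ Submodule.span R S := by
    intro x
    have hx : x ∈ Algebra.adjoin R (Set.range fun i => ι Q (b i)) := by
      rw [adjoin_range_ι_basis]; trivial
    induction hx using Algebra.adjoin_induction with
    | mem x hx =>
      obtain ⟨i, rfl⟩ := hx
      exact fun y hy => (Submodule.span_le (p := (Submodule.span R S).comap
        (LinearMap.mulLeft R (ι Q (b i))))).mpr (hS i) hy
    | algebraMap r => exact fun y hy => Algebra.smul_def r y ▸ Submodule.smul_mem _ r hy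
    | add x x' _ _ hx hx' => exact fun y hy => (add_mul x x' y).symm ▸ add_mem (hx y hy) (hx' y hy)
    | mul x x' _ _ hx hx' => exact fun y hy => (mul_assoc x x' y).symm ▸ hx _ (hx' y hy)
  exact eq_top_iff.mpr fun x _ => mul_one x ▸ hmul x 1 (Submodule.subset_span h1)

section OrthogonalBasis

variable {b : Module.Basis κ R M}

theorem ι_basis_mul_ι_basis_mul_self (i : κ) (x : CliffordAlgebra Q) :
    ι Q (b i) * (ι Q (b i) * x) = Q (b i) • x := by
  rw [← mul_assoc, ι_sq_scalar, Algebra.smul_def]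

variable [Preorder κ] (hb : Pairwise fun i j => Q.IsOrtho (b i) (b j))
include hb

theorem ι_basis_mul_ι_basis_of_lt {i j : κ} (hij : j < i) :
    ι Q (b i) * ι Q (b j) = -(ι Q (b j) * ι Q (b i)) :=
  ι_mul_ι_comm_of_isOrtho (hb hij.ne')

theorem ι_basis_mul_ι_basis_mul_of_lt {i j : κ} (hij : j < i) (x : CliffordAlgebra Q) :
    ι Q (b i) * (ι Q (b j) * x) = -(ι Q (b j) * (ι Q (b i) * x)) :=
  ι_mul_ι_mul_of_isOrtho x (hb hij.ne')

end OrthogonalBasis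

section BasisBlades

variable (Q) in
def basisBlades (b : Module.Basis (Fin 3) R M) : Set (CliffordAlgebra Q) :=
  {1, ι Q (b 0), ι Q (b 1), ι Q (b 2), ι Q (b 0) * ι Q (b 1), ι Q (b 0) * ι Q (b 2),
    ι Q (b 1) * ι Q (b 2), ι Q (b 0) * (ι Q (b 1) * ι Q (b 2))}

variable {b : Module.Basis (Fin 3) R M} (hb : Pairwise fun i j => Q.IsOrtho (b i) (b j))
include hb

theorem ι_basis_mul_mem_span_basisBlades (i : Fin 3) {s : CliffordAlgebra Q}
    (hs : s ∈ basisBlades Q b) : ι Q (b i) * s ∈ Submodule.span R (basisBlades Q b) := by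
  simp only [basisBlades, Set.mem_insert_iff, Set.mem_singleton_iff] at hs
  fin_cases i <;> rcases hs with rfl | rfl | rfl | rfl | rfl | rfl | rfl | rfl <;>
    simp only [Fin.zero_eta, Fin.mk_one, Fin.reduceFinMk, Fin.reduceLT, mul_one,
      ι_sq_scalar, Algebra.algebraMap_eq_smul_one, ι_basis_mul_ι_basis_mul_self,
      ι_basis_mul_ι_basis_of_lt hb, ι_basis_mul_ι_basis_mul_of_lt hb, mul_neg, neg_neg,
      mul_smul_comm] <;>
    repeat first | apply Submodule.neg_mem | apply Submodule.smul_mem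
  all_goals exact Submodule.subset_span (by simp [basisBlades])

theorem span_basisBlades_eq_top : Submodule.span R (basisBlades Q b) = ⊤ :=
  span_eq_top_of_ι_basis_mul_mem b (by simp [basisBlades]) fun i _ =>
    ι_basis_mul_mem_span_basisBlades hb i

theorem ι_basis_mul_ι_basis_mul_ι_basis_mem_center :
    ι Q (b 0) * (ι Q (b 1) * ι Q (b 2)) ∈ Subalgebra.center R (CliffordAlgebra Q) := by
  refine mem_center_of_commute_ι_basis b fun i => (commute_iff_eq _ _).mpr ?_
  fin_cases i <;>
    simp only [Fin.zero_eta, Fin.mk_one, Fin.reduceFinMk, Fin.reduceLT, mul_assoc,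
      ι_basis_mul_ι_basis_mul_self, ι_basis_mul_ι_basis_of_lt hb, ι_basis_mul_ι_basis_mul_of_lt hb,
      mul_neg, neg_neg, mul_smul_comm]

theorem add_reverse_involute_mem_center_s15 (x : CliffordAlgebra Q) :
    x + reverse (involute x) ∈ Subalgebra.center R (CliffordAlgebra Q) := by
  let L := LinearMap.id + reverse ∘ₗ (involute : CliffordAlgebra Q →ₐ[R] _).toLinearMap
  suffices LinearMap.range L ≤ Subalgebra.toSubmodule (Subalgebra.center R _) from this ⟨x, rfl⟩
  rw [LinearMap.range_eq_map, ← span_basisBlades_eq_top hb, Submodule.map_span_le]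
  intro s hs
  simp only [basisBlades, Set.mem_insert_iff, Set.mem_singleton_iff] at hs
  rcases hs with rfl | rfl | rfl | rfl | rfl | rfl | rfl | rfl <;>
    simp [L, mul_assoc, ι_basis_mul_ι_basis_of_lt hb, ι_basis_mul_ι_basis_mul_of_lt hb, add_mem,
      ι_basis_mul_ι_basis_mul_ι_basis_mem_center hb]

end BasisBlades

end CliffordAlgebra

theorem QuadraticForm.exists_basis_fin_pairwise_isOrtho {K V : Type*} [Field K]
    [Invertible (2 : K)] [AddCommGroup V] [Module K V] [FiniteDimensional K V]
    (Q : QuadraticForm K V) {n : ℕ} (h : Module.finrank K V = n) :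
    ∃ b : Module.Basis (Fin n) K V, Pairwise fun i j => Q.IsOrtho (b i) (b j) := by
  subst h
  obtain ⟨v, hv⟩ :=
    LinearMap.BilinForm.exists_orthogonal_basis (QuadraticForm.associated_isSymm K Q)
  exact ⟨v, fun i j hij => QuadraticMap.associated_isOrtho.mp (hv hij)⟩

theorem stmt_15 {V : Type*} [AddCommGroup V] [Module ℝ V] (Q : QuadraticForm ℝ V)
    (h : Module.finrank ℝ V = 3) (U : CliffordAlgebra Q) :
    (involute U * U + reverse (involute U) * reverse U =
      U * involute U + reverse U * reverse (involute U)) ∧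
    reverse (involute U * U - U * involute U) = involute U * U - U * involute U := by
  have : FiniteDimensional ℝ V := Module.finite_of_finrank_eq_succ h
  obtain ⟨b, hb⟩ := Q.exists_basis_fin_pairwise_isOrtho h
  have hcentral (x : CliffordAlgebra Q) : x + reverse (involute x) ∈ Set.center _ :=
    add_reverse_involute_mem_center_s15 hb x
  have hrev : reverse (involute U * U - U * involute U) = involute U * U - U * involute U := by
    rw [map_sub, reverse.map_mul, reverse.map_mul]
    refine commutator_eq_of_add_mem_center ?_ (hcentral U)
    simpa only [involute_involute] using hcentral (involute U)
  refine ⟨?_, hrev⟩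
  rw [map_sub, reverse.map_mul, reverse.map_mul, sub_eq_sub_iff_add_eq_add] at hrev
  rw [← hrev, add_comm]
end

section
/- Let A be an N×N matrix with complex entries such that the trace of A^k is a real number (has zero imaginary part) for every k with 1 ≤ k ≤ N. Then the determinant of A is a real number (has zero imaginary part). -/
/-!
Over an algebraically closed field, `trace (A ^ k)` is the `k`-th power sum of the roots of the
characteristic polynomial: on each generalized eigenspace `A` is a scalar `μ` plus a commuting
nilpotent, so `A ^ k` contributes `μ ^ k` times the algebraic multiplicity of `μ`. Newton's
identities then express the elementary symmetric functions of the roots, in particular their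
product `det A`, through the first `N` power sums by field operations with rational coefficients,
so `det A` lies in every subfield containing `trace (A ^ k)` for `1 ≤ k ≤ N`; take the real numbers.
-/

open Polynomial

namespace Module.End

section Nilpotent

variable {R M : Type*} [CommRing R] [IsReduced R] [AddCommGroup M] [Module R M]
  [Module.Free R M] [Module.Finite R M]

theorem trace_pow_of_isNilpotent_sub_algebraMap {g : End R M} (μ : R)
    (hg : IsNilpotent (g - algebraMap R _ μ)) (k : ℕ) :
    LinearMap.trace R M (g ^ k) = Module.finrank R M * μ ^ k := by
  induction k with
  | zero => simp
  | succ k ih =>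
    rw [pow_succ, mul_eq_comp, LinearMap.trace_comp_eq_mul_of_commute_of_isNilpotent μ
      ((Commute.refl g).pow_left k) hg, ih]
    ring

end Nilpotent

section AlgClosed

variable {K V : Type*} [Field K] [IsAlgClosed K] [AddCommGroup V] [Module K V]
  [FiniteDimensional K V]

theorem trace_pow_eq_sum_roots_charpoly (f : End K V) (k : ℕ) :
    LinearMap.trace K V (f ^ k) = (f.charpoly.roots.map (· ^ k)).sum := by
  classical
  have hds := DirectSum.isInternal_submodule_of_iSupIndep_of_iSup_eq_top
    f.independent_maxGenEigenspace f.iSup_maxGenEigenspace_eq_top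
  have hfin := WellFoundedGT.finite_ne_bot_of_iSupIndep f.independent_maxGenEigenspace
  have hmaps (μ : K) := f.mapsTo_maxGenEigenspace_of_comm (Commute.refl f) μ
  have hmapsPow (μ : K) := f.mapsTo_maxGenEigenspace_of_comm ((Commute.refl f).pow_right k) μ
  have hcount (μ : K) : f.charpoly.roots.count μ = finrank K (f.maxGenEigenspace μ) := by
    rw [count_roots, LinearMap.finrank_maxGenEigenspace_eq]
  have htrace (μ : K) : LinearMap.trace K _ ((f ^ k).restrict (hmapsPow μ)) =
      f.charpoly.roots.count μ • μ ^ k := by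
    rw [← pow_restrict k (hmaps μ), trace_pow_of_isNilpotent_sub_algebraMap μ
      (f.isNilpotent_restrict_maxGenEigenspace_sub_algebraMap μ), hcount, nsmul_eq_mul]
  rw [LinearMap.trace_eq_sum_trace_restrict' hds hfin hmapsPow, Finset.sum_multiset_map_count]
  simp only [htrace]
  refine Finset.sum_subset (fun μ hμ => ?_) (fun μ _ hμ => ?_)
  · rw [Set.Finite.mem_toFinset] at hμ
    rw [Multiset.mem_toFinset, ← Multiset.count_pos, hcount]
    exact Nat.pos_of_ne_zero (Submodule.finrank_eq_zero.not.mpr hμ)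
  · rw [Set.Finite.mem_toFinset, Set.mem_ofPred_eq, not_not] at hμ
    rw [hcount, hμ, finrank_bot, zero_smul]

end AlgClosed

end Module.End

namespace MvPolynomial

variable {σ K : Type*} [Fintype σ] [Field K] [CharZero K]

theorem aeval_esymm_mem_of_aeval_psum_mem (F : Subfield K) (x : σ → K)
    (hx : ∀ k, 1 ≤ k → k ≤ Fintype.card σ → aeval x (psum σ K k) ∈ F) (j : ℕ) :
    aeval x (esymm σ K j) ∈ F := by
  classical
  induction j using Nat.strong_induction_on with
  | _ j ih =>
  rcases Nat.eq_zero_or_pos j with rfl | hj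
  · simp [esymm_zero, F.one_mem]
  rcases lt_or_ge (Fintype.card σ) j with hcard | hcard
  · simp [esymm, Finset.powersetCard_eq_empty.mpr hcard, F.zero_mem]
  have hnewton := congrArg (aeval x) (mul_esymm_eq_sum σ K j)
  simp only [map_mul, map_natCast, map_sum, map_pow, map_neg, map_one] at hnewton
  have hsum : (j : K) * aeval x (esymm σ K j) ∈ F := by
    rw [hnewton]
    refine F.mul_mem (F.pow_mem (F.neg_mem F.one_mem) _) (F.sum_mem fun a ha => ?_)
    obtain ⟨hdiag, hlt⟩ := Finset.mem_filter.mp ha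
    have hadd := Finset.HasAntidiagonal.mem_antidiagonal.mp hdiag
    exact F.mul_mem (F.mul_mem (F.pow_mem (F.neg_mem F.one_mem) _) (ih a.1 hlt))
      (hx a.2 (by omega) (by omega))
  have hj0 : (j : K) ≠ 0 := Nat.cast_ne_zero.mpr hj.ne'
  simpa [hj0] using F.mul_mem (F.inv_mem (natCast_mem F j)) hsum

end MvPolynomial

theorem Multiset.prod_mem_of_sum_map_pow_mem {K : Type*} [Field K] [CharZero K] (F : Subfield K)
    (s : Multiset K) (hs : ∀ k, 1 ≤ k → k ≤ card s → (s.map (· ^ k)).sum ∈ F) : s.prod ∈ F := by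
  classical
  have := MvPolynomial.aeval_esymm_mem_of_aeval_psum_mem F (fun a : s => (a : K)) ?_ (card s)
  · rw [MvPolynomial.aeval_esymm_eq_multiset_esymm, map_univ_coe] at this
    simpa [esymm] using this
  · intro k hk1 hk
    rw [card_coe] at hk
    simp only [MvPolynomial.psum, map_sum, map_pow, MvPolynomial.aeval_X]
    rw [Finset.sum_eq_multiset_sum]
    exact (map_univ_comp_coe s (· ^ k)).symm ▸ hs k hk1 hk

namespace Matrix

variable {n K : Type*} [Fintype n] [DecidableEq n] [Field K] [IsAlgClosed K]

theorem trace_pow_eq_sum_roots_charpoly (A : Matrix n n K) (k : ℕ) :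
    (A ^ k).trace = (A.charpoly.roots.map (· ^ k)).sum := by
  have := Module.End.trace_pow_eq_sum_roots_charpoly (toLin' A) k
  rwa [← toLin'_pow, trace_toLin'_eq, charpoly_toLin'] at this

theorem det_mem_of_trace_pow_mem [CharZero K] (F : Subfield K) (A : Matrix n n K)
    (hA : ∀ k, 1 ≤ k → k ≤ Fintype.card n → (A ^ k).trace ∈ F) : A.det ∈ F := by
  rw [det_eq_prod_roots_charpoly]
  refine Multiset.prod_mem_of_sum_map_pow_mem F _ fun k hk1 hk => ?_
  rw [IsAlgClosed.card_roots_eq_natDegree, charpoly_natDegree_eq_dim] at hk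
  exact trace_pow_eq_sum_roots_charpoly A k ▸ hA k hk1 hk

end Matrix

theorem stmt_18 {N : ℕ} (A : Matrix (Fin N) (Fin N) ℂ)
    (h : ∀ k : ℕ, 1 ≤ k → k ≤ N → (Matrix.trace (A ^ k)).im = 0) :
    (Matrix.det A).im = 0 := by
  have hreal (z : ℂ) : z ∈ (starRingEnd ℂ).eqLocusField (RingHom.id ℂ) ↔ z.im = 0 :=
    Complex.conj_eq_iff_im
  rw [← hreal]
  exact A.det_mem_of_trace_pow_mem _ fun k hk1 hk =>
    (hreal _).mpr (h k hk1 (by simpa using hk))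
end

section
/- (Faddeev–LeVerrier) Let K be a field of characteristic zero, let N ≥ 1, and let A be an N×N matrix over K. Define matrices M_k and scalars c_k for 1 ≤ k ≤ N recursively by M_1 = A, c_k = (1/k)·trace(M_k), and M_{k+1} = A·(M_k − c_k·I). Then the characteristic polynomial of A equals X^N − c_1·X^{N−1} − c_2·X^{N−2} − ⋯ − c_{N−1}·X − c_N; in particular det(A) = (−1)^{N−1}·c_N. -/
open Polynomial

lemma fl_deriv_prod {R : Type*} [CommRing R] {ι : Type*} [DecidableEq ι]
    (s : Finset ι) (f : ι → R[X]) :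
    derivative (∏ i ∈ s, f i) = ∑ i ∈ s, (∏ j ∈ s.erase i, f j) * derivative (f i) := by
  induction s using Finset.induction_on with
  | empty => simp
  | @insert a s ha ih =>
    rw [Finset.prod_insert ha, derivative_mul, ih, Finset.sum_insert ha,
      Finset.erase_insert ha, Finset.mul_sum]
    rw [mul_comm (derivative (f a))]
    congr 1
    refine Finset.sum_congr rfl fun i hi => ?_
    rw [Finset.erase_insert_of_ne (Ne.symm (fun h : i = a => ha (h ▸ hi))),
      Finset.prod_insert (fun h => ha (Finset.mem_of_mem_erase h)), mul_assoc]

lemma fl_jacobi {R : Type*} [CommRing R] {n : Type*} [Fintype n] [DecidableEq n]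
    (M : Matrix n n R[X]) :
    derivative M.det = ∑ r, (M.updateRow r fun j => derivative (M r j)).det := by
  rw [Matrix.det_apply', derivative_sum]
  simp only [Matrix.det_apply']
  rw [Finset.sum_comm]
  refine Finset.sum_congr rfl fun σ _ => ?_
  rw [derivative_intCast_mul, fl_deriv_prod, Finset.mul_sum]
  rw [← Equiv.sum_comp σ (fun r => ((Equiv.Perm.sign σ : ℤ) : R[X]) *
    ∏ i, (M.updateRow r fun j => derivative (M r j)) (σ i) i)]
  refine Finset.sum_congr rfl fun i _ => ?_
  congr 1
  have hrow : (fun j => (M.updateRow (σ i) fun b => derivative (M (σ i) b)) (σ j) j)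
      = Function.update (fun j => M (σ j) j) i (derivative (M (σ i) i)) := by
    funext j
    rw [Matrix.updateRow_apply, Function.update_apply]
    by_cases h : j = i
    · subst h; simp
    · rw [if_neg (by simpa using fun hh => h (σ.injective hh)), if_neg h]
  calc (∏ j ∈ Finset.univ.erase i, M (σ j) j) * derivative (M (σ i) i)
      = derivative (M (σ i) i) * ∏ j ∈ Finset.univ.erase i, M (σ j) j := mul_comm _ _
    _ = ∏ j, Function.update (fun j => M (σ j) j) i (derivative (M (σ i) i)) j := by
        rw [Finset.prod_update_of_mem (Finset.mem_univ i), Finset.erase_eq]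
    _ = ∏ j, (M.updateRow (σ i) fun b => derivative (M (σ i) b)) (σ j) j := by rw [hrow]

set_option maxHeartbeats 2000000 in
theorem stmt_19 {K : Type*} [Field K] [CharZero K] {N : ℕ} (hN : 1 ≤ N)
    (A : Matrix (Fin N) (Fin N) K)
    (M : ℕ → Matrix (Fin N) (Fin N) K) (c : ℕ → K)
    (hM1 : M 1 = A)
    (hc : ∀ k, 1 ≤ k → k ≤ N → c k = (1 / (k : K)) * Matrix.trace (M k))
    (hM : ∀ k, 1 ≤ k → k ≤ N → M (k + 1) = A * (M k - c k • (1 : Matrix (Fin N) (Fin N) K))) :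
    Matrix.charpoly A =
      X ^ N - ∑ k ∈ Finset.Icc 1 N, C (c k) * X ^ (N - k) ∧
    Matrix.det A = (-1) ^ (N - 1) * c N := by
  classical
  set p : K[X] := Matrix.charpoly A with hp
  set B : Matrix (Fin N) (Fin N) K[X] := (Matrix.charmatrix A).adjugate with hB
  set D : ℕ → Matrix (Fin N) (Fin N) K :=
    fun m => Matrix.of (fun i j => (B i j).coeff m) with hD
  have hpmonic : p.Monic := Matrix.charpoly_monic A
  have hdeg : p.natDegree = N := by
    rw [hp, Matrix.charpoly_natDegree_eq_dim, Fintype.card_fin]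
  have hcoeffN : p.coeff N = 1 := by rw [← hdeg]; exact hpmonic.coeff_natDegree
  have hmul : Matrix.charmatrix A * B = p • (1 : Matrix (Fin N) (Fin N) K[X]) := by
    rw [hB, Matrix.mul_adjugate]; rfl
  -- entrywise identity
  have hent : ∀ i j : Fin N,
      X * B i j - ∑ l, C (A i l) * B l j = if i = j then p else 0 := by
    intro i j
    have h0 : (Matrix.charmatrix A * B) i j = (p • (1 : Matrix (Fin N) (Fin N) K[X])) i j := by
      rw [hmul]
    rw [Matrix.mul_apply] at h0
    simp only [Matrix.charmatrix_apply, Matrix.diagonal_apply, sub_mul, ite_mul, zero_mul,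
      Finset.sum_sub_distrib, Finset.sum_ite_eq, Finset.mem_univ, if_true,
      Matrix.smul_apply, Matrix.one_apply, smul_eq_mul, mul_ite, mul_one, mul_zero] at h0
    exact h0
  -- coefficient recursions
  have hDs : ∀ m, D m = A * D (m + 1) + p.coeff (m + 1) • (1 : Matrix (Fin N) (Fin N) K) := by
    intro m
    ext i j
    have h0 := congrArg (fun q : K[X] => q.coeff (m + 1)) (hent i j)
    simp only [coeff_sub, coeff_X_mul, finset_sum_coeff, coeff_C_mul, apply_ite
      (fun q : K[X] => q.coeff (m + 1)), coeff_zero] at h0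
    rw [sub_eq_iff_eq_add] at h0
    simp only [hD, Matrix.add_apply, Matrix.mul_apply, Matrix.smul_apply, Matrix.one_apply,
      Matrix.of_apply, smul_eq_mul, mul_ite, mul_one, mul_zero]
    rw [h0, add_comm]
  have hD0 : A * D 0 = (-(p.coeff 0)) • (1 : Matrix (Fin N) (Fin N) K) := by
    ext i j
    have h0 := congrArg (fun q : K[X] => q.coeff 0) (hent i j)
    simp only [coeff_sub, finset_sum_coeff, coeff_C_mul, apply_ite
      (fun q : K[X] => q.coeff 0), coeff_zero, mul_coeff_zero, coeff_X_zero, zero_mul,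
      zero_sub, coeff_C_zero] at h0
    simp only [hD, Matrix.mul_apply, Matrix.smul_apply, Matrix.one_apply,
      Matrix.of_apply, smul_eq_mul, mul_ite, mul_one, mul_zero]
    rw [neg_eq_iff_eq_neg.mp h0]
    split_ifs <;> simp
  -- vanishing of high coefficients
  have hDzero : ∀ m, N ≤ m → D m = 0 := by
    set T : ℕ := Finset.univ.sup (fun ij : Fin N × Fin N => (B ij.1 ij.2).natDegree) with hT
    have hTz : ∀ m, T < m → D m = 0 := by
      intro m hm
      ext i j
      simp only [hD, Matrix.of_apply, Matrix.zero_apply]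
      refine coeff_eq_zero_of_natDegree_lt (lt_of_le_of_lt ?_ hm)
      exact Finset.le_sup (f := fun ij : Fin N × Fin N => (B ij.1 ij.2).natDegree)
        (Finset.mem_univ (i, j))
    have key : ∀ d m, N ≤ m → T + 1 ≤ m + d → D m = 0 := by
      intro d
      induction d with
      | zero => intro m hm h; exact hTz m (by omega)
      | succ d ih =>
        intro m hm h
        rcases lt_or_ge T m with hlt | hle
        · exact hTz m hlt
        · rw [hDs m, ih (m + 1) (by omega) (by omega),
            coeff_eq_zero_of_natDegree_lt (by omega : p.natDegree < m + 1)]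
          simp
    intro m hm
    exact key (T + 1) m hm (by omega)
  -- Jacobi : derivative of charpoly is trace of adjugate of charmatrix
  have hadj : derivative p = Matrix.trace B := by
    rw [hp, Matrix.charpoly, fl_jacobi, Matrix.trace]
    refine Finset.sum_congr rfl fun i _ => ?_
    rw [Matrix.diag, hB, Matrix.adjugate_apply]
    have hfun : (fun j => derivative (Matrix.charmatrix A i j)) = Pi.single i (1 : K[X]) := by
      funext j
      by_cases h : i = j
      · subst h
        simp [Matrix.charmatrix_apply_eq]
      · rw [Matrix.charmatrix_apply_ne _ _ _ h, Pi.single_eq_of_ne (Ne.symm h)]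
        simp
    rw [hfun]
  have htrD : ∀ m, Matrix.trace (D m) = ((m : K) + 1) * p.coeff (m + 1) := by
    intro m
    have h1 : Matrix.trace (D m) = (Matrix.trace B).coeff m := by
      simp [Matrix.trace, Matrix.diag, hD, finset_sum_coeff]
    rw [h1, ← hadj, coeff_derivative]
    ring
  have htrAD : ∀ m, Matrix.trace (A * D m) = ((m : K) - N) * p.coeff m := by
    intro m
    cases m with
    | zero =>
      rw [hD0, Matrix.trace_smul, Matrix.trace_one]
      simp [Fintype.card_fin]
      ring
    | succ j =>
      have h1 : A * D (j + 1) = D j - p.coeff (j + 1) • (1 : Matrix (Fin N) (Fin N) K) := by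
        rw [eq_sub_iff_add_eq]; exact (hDs j).symm
      rw [h1, Matrix.trace_sub, htrD j, Matrix.trace_smul, Matrix.trace_one, smul_eq_mul,
        Fintype.card_fin]
      push_cast
      ring
  -- main induction
  have main : ∀ k, 1 ≤ k → k ≤ N →
      M k = A * D (N - k) ∧ c k = -p.coeff (N - k) := by
    intro k hk
    induction k, hk using Nat.le_induction with
    | base =>
      intro _
      have hDN1 : D (N - 1) = 1 := by
        rw [hDs (N - 1), show N - 1 + 1 = N from Nat.succ_pred_eq_of_pos hN,
          hDzero N le_rfl, hcoeffN]
        simp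
      have h1 : M 1 = A * D (N - 1) := by rw [hM1, hDN1, Matrix.mul_one]
      refine ⟨h1, ?_⟩
      rw [hc 1 le_rfl hN, h1, htrAD]
      have : ((N - 1 : ℕ) : K) = (N : K) - 1 := by
        push_cast [Nat.cast_sub hN]; ring
      rw [this]
      push_cast
      ring
    | succ k hk1 ih =>
      intro hkN
      obtain ⟨hMk, hck⟩ := ih (by omega)
      have e1 : N - k = (N - (k + 1)) + 1 := by omega
      have h2 : D (N - (k + 1)) = A * D (N - k) + p.coeff (N - k) • (1 : Matrix (Fin N) (Fin N) K) := by
        have h3 := hDs (N - (k + 1))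
        rw [← e1] at h3
        exact h3
      have hM1' : M (k + 1) = A * D (N - (k + 1)) := by
        rw [hM k hk1 (by omega), hMk, hck, neg_smul, sub_neg_eq_add, ← h2]
      refine ⟨hM1', ?_⟩
      rw [hc (k + 1) (by omega) hkN, hM1', htrAD]
      have hc1 : ((N - (k + 1) : ℕ) : K) = (N : K) - ((k : K) + 1) := by
        push_cast [Nat.cast_sub hkN]; ring
      have hne : ((k : K) + 1) ≠ 0 := by
        have : ((k + 1 : ℕ) : K) ≠ 0 := Nat.cast_ne_zero.mpr (by omega)
        push_cast at this; exact this
      rw [hc1]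
      push_cast
      field_simp
      ring
  have hcN : c N = -p.coeff 0 := by
    have := (main N hN le_rfl).2
    simpa using this
  constructor
  · have hcs : ∀ k ∈ Finset.Icc 1 N, C (c k) * X ^ (N - k)
        = -(C (p.coeff (N - k)) * X ^ (N - k)) := by
      intro k hk
      obtain ⟨h1, h2⟩ := Finset.mem_Icc.mp hk
      rw [(main k h1 h2).2, map_neg, neg_mul]
    rw [Finset.sum_congr rfl hcs, Finset.sum_neg_distrib, sub_neg_eq_add]
    have hre : ∑ k ∈ Finset.Icc 1 N, C (p.coeff (N - k)) * X ^ (N - k)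
        = ∑ m ∈ Finset.range N, C (p.coeff m) * X ^ m := by
      refine Finset.sum_nbij' (fun k => N - k) (fun m => N - m) ?_ ?_ ?_ ?_ ?_
      · intro k hk; obtain ⟨h1, h2⟩ := Finset.mem_Icc.mp hk
        exact Finset.mem_range.mpr (by omega)
      · intro m hm; have := Finset.mem_range.mp hm
        exact Finset.mem_Icc.mpr (by omega)
      · intro k hk; obtain ⟨h1, h2⟩ := Finset.mem_Icc.mp hk; omega
      · intro m hm; have := Finset.mem_range.mp hm; omega
      · intro k hk; rfl
    rw [hre]
    conv_lhs => rw [p.as_sum_range' (N + 1) (by omega)]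
    rw [Finset.sum_range_succ]
    simp only [← C_mul_X_pow_eq_monomial, hcoeffN, map_one, one_mul]
    ring
  · rw [Matrix.det_eq_sign_charpoly_coeff, Fintype.card_fin, hcN,
      show ((-1 : K) ^ N) = (-1) ^ (N - 1) * (-1) from by
        rw [← pow_succ]; congr 1; omega]
    ring
end
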